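/- arXiv:1812.02301 — 3 statements merged into one kernel-verified Lean document; each statement's English description precedes it below -/
import Mathlib

section
/- Let C̃_{nm} = c_{nm} − c_{mn}. Suppose there exists a cycle of k > 2 distinct nodes n_1, …, n_k (with n_{k+1} := n_1) such that Σ_{i=1}^{k} C̃_{n_i, n_{i+1}} < 0. Then at any optimal solution of the centralized social-welfare maximization problem, there exists an index i such that q_{n_{i+1}, n_i} = κ_{n_{i+1}, n_i}, i.e., some trade opposed to the cycle is at full capacity. Symmetrically, a strictly positive cycle forces some trade along the cycle to be at full capacity. -/
open Finset

/-- Parameters of the energy market: utility/cost coefficients, target demands,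
renewable generation, capacity bounds, preference prices `c` and line capacities `κ`. -/
structure MarketParams (N : Type*) where
  ta : N → ℝ
  tb : N → ℝ
  a : N → ℝ
  b : N → ℝ
  d : N → ℝ
  Dstar : N → ℝ
  dG : N → ℝ
  Dlow : N → ℝ
  Dbar : N → ℝ
  Glow : N → ℝ
  Gbar : N → ℝ
  c : N → N → ℝ
  κ : N → N → ℝ

namespace MarketParams

variable {N : Type*} [Fintype N] [DecidableEq N]

/-- Utility `Π_n` of agent `n`: usage benefit minus production cost minus trading cost,
where `qn m = q_{mn}` is the quantity agent `n` receives from `m`. -/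
noncomputable def util (P : MarketParams N) (n : N) (Dn Gn : ℝ) (qn : N → ℝ) : ℝ :=
  (-(P.ta n) * (Dn - P.Dstar n) ^ 2 + P.tb n)
    - (P.a n / 2 * Gn ^ 2 + P.b n * Gn + P.d n)
    - ∑ m ∈ Finset.univ.erase n, P.c n m * qn m

/-- Joint feasibility: bounds on demand and generation, line capacities,
trading reciprocity and nodal balance. -/
def Feas (P : MarketParams N) (D G : N → ℝ) (q : N → N → ℝ) : Prop :=
  (∀ n, P.Dlow n ≤ D n ∧ D n ≤ P.Dbar n) ∧
  (∀ n, P.Glow n ≤ G n ∧ G n ≤ P.Gbar n) ∧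
  (∀ n m, m ≠ n → q m n ≤ P.κ m n) ∧
  (∀ n m, m ≠ n → q m n + q n m ≤ 0) ∧
  (∀ n, D n = G n + P.dG n + ∑ m ∈ Finset.univ.erase n, q m n)

/-- Social welfare: sum of the agents' utilities. -/
noncomputable def SW (P : MarketParams N) (D G : N → ℝ) (q : N → N → ℝ) : ℝ :=
  ∑ n, P.util n (D n) (G n) (fun m => q m n)

/-- Optimality for the centralized market design. -/
def IsOptimal (P : MarketParams N) (D G : N → ℝ) (q : N → N → ℝ) : Prop :=
  P.Feas D G q ∧ ∀ D' G' q', P.Feas D' G' q' → P.SW D' G' q' ≤ P.SW D G q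

end MarketParams

lemma cycle_neg {N : Type*} [Fintype N] [DecidableEq N] (P : MarketParams N)
    (D G : N → ℝ) (q : N → N → ℝ) (hopt : P.IsOptimal D G q)
    (k : ℕ) (f : Fin (k + 3) → N) (hinj : Function.Injective f)
    (hneg : ∑ i : Fin (k + 3), (P.c (f i) (f (i + 1)) - P.c (f (i + 1)) (f i)) < 0) :
    ∃ i : Fin (k + 3), q (f (i + 1)) (f i) = P.κ (f (i + 1)) (f i) := by
  by_contra hc
  push_neg at hc
  obtain ⟨⟨hD, hG, hκ, hrec, hbal⟩, hmax⟩ := hopt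
  have h10 : (1 : Fin (k + 3)) ≠ 0 := by
    simp [Fin.ext_iff, Nat.mod_eq_of_lt]
  have hne : ∀ i : Fin (k + 3), f (i + 1) ≠ f i := by
    intro i h
    have h2 : i + 1 = i := hinj h
    apply h10
    have := congrArg (fun x => x - i) h2
    simpa using this
  have hlt : ∀ i : Fin (k + 3), q (f (i + 1)) (f i) < P.κ (f (i + 1)) (f i) :=
    fun i => lt_of_le_of_ne (hκ (f i) (f (i + 1)) (hne i)) (hc i)
  have hnonempty : (Finset.univ : Finset (Fin (k + 3))).Nonempty := univ_nonempty
  set ε : ℝ := (Finset.univ : Finset (Fin (k + 3))).inf' hnonempty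
      (fun i => P.κ (f (i + 1)) (f i) - q (f (i + 1)) (f i)) with hεdef
  have hεpos : 0 < ε := by
    rw [hεdef, Finset.lt_inf'_iff]
    exact fun i _ => sub_pos.mpr (hlt i)
  have hεle : ∀ i, ε ≤ P.κ (f (i + 1)) (f i) - q (f (i + 1)) (f i) :=
    fun i => Finset.inf'_le _ (mem_univ i)
  set A : N → N → ℝ :=
    fun m n => ∑ i : Fin (k + 3), if m = f (i + 1) ∧ n = f i then ε else 0 with hA
  have hAval : ∀ i : Fin (k + 3), A (f (i + 1)) (f i) = ε := by
    intro i
    rw [hA]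
    simp only
    rw [Finset.sum_eq_single_of_mem i (mem_univ i)]
    · simp
    · intro j _ hj
      rw [if_neg]
      rintro ⟨-, h2⟩
      exact hj (hinj h2.symm)
  have hA0 : ∀ m n, (¬ ∃ i, m = f (i + 1) ∧ n = f i) → A m n = 0 := by
    intro m n h
    exact Finset.sum_eq_zero fun i _ => if_neg fun hi => h ⟨i, hi⟩
  have hAnonneg : ∀ m n, 0 ≤ A m n := by
    intro m n
    refine Finset.sum_nonneg fun i _ => ?_
    split_ifs
    · exact le_of_lt hεpos
    · exact le_refl 0
  have hAle : ∀ m n, A m n ≤ ε := by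
    intro m n
    by_cases h : ∃ i, m = f (i + 1) ∧ n = f i
    · obtain ⟨i, h1, h2⟩ := h
      rw [h1, h2, hAval]
    · rw [hA0 m n h]
      exact le_of_lt hεpos
  have hAdiag : ∀ n, A n n = 0 := by
    intro n
    refine hA0 n n ?_
    rintro ⟨i, h1, h2⟩
    exact hne i (h1.symm.trans h2)
  have hrow : ∀ n, ∑ m, A m n = ∑ i : Fin (k + 3), if n = f i then ε else 0 := by
    intro n
    rw [hA]
    simp only
    rw [Finset.sum_comm]
    refine Finset.sum_congr rfl fun i _ => ?_
    by_cases h : n = f i <;> simp [h, Finset.sum_ite_eq, Finset.sum_ite_eq']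
  have hcol : ∀ n, ∑ m, A n m = ∑ i : Fin (k + 3), if n = f (i + 1) then ε else 0 := by
    intro n
    rw [hA]
    simp only
    rw [Finset.sum_comm]
    refine Finset.sum_congr rfl fun i _ => ?_
    by_cases h : n = f (i + 1) <;> simp [h, Finset.sum_ite_eq, Finset.sum_ite_eq']
  have hshift : ∀ n, (∑ i : Fin (k + 3), if n = f (i + 1) then ε else 0)
      = ∑ i : Fin (k + 3), if n = f i then ε else 0 := by
    intro n
    exact Fintype.sum_equiv (Equiv.addRight 1) _ _ (fun i => rfl)
  have hdelta : ∀ n, ∑ m ∈ Finset.univ.erase n, (A m n - A n m) = 0 := by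
    intro n
    rw [Finset.sum_erase _ (by rw [sub_self])]
    rw [Finset.sum_sub_distrib, hrow, hcol, hshift, sub_self]
  set q' : N → N → ℝ := fun m n => q m n + (A m n - A n m) with hq'
  have hq'app : ∀ m n, q' m n = q m n + (A m n - A n m) := fun m n => rfl
  have hfeas' : P.Feas D G q' := by
    refine ⟨hD, hG, ?_, ?_, ?_⟩
    · intro n m hmn
      rw [hq'app]
      by_cases h : ∃ i, m = f (i + 1) ∧ n = f i
      · obtain ⟨i, h1, h2⟩ := h
        have hAe : A m n = ε := by rw [h1, h2, hAval]
        have h3 : ε ≤ P.κ m n - q m n := by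
          rw [h1, h2]; exact hεle i
        have := hAnonneg n m
        linarith
      · rw [hA0 m n h]
        have := hAnonneg n m
        have := hκ n m hmn
        linarith
    · intro n m hmn
      rw [hq'app, hq'app]
      have := hrec n m hmn
      linarith
    · intro n
      have : ∑ m ∈ Finset.univ.erase n, q' m n
          = ∑ m ∈ Finset.univ.erase n, q m n := by
        simp_rw [hq'app]
        rw [Finset.sum_add_distrib, hdelta, add_zero]
      rw [this]
      exact hbal n
  have hT1 : ∀ i : Fin (k + 3),
      (∑ n, ∑ m, if m = f (i + 1) ∧ n = f i then P.c n m * ε else 0)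
        = P.c (f i) (f (i + 1)) * ε := by
    intro i
    have h1 : ∀ n, (∑ m, if m = f (i + 1) ∧ n = f i then P.c n m * ε else 0)
        = if n = f i then P.c n (f (i + 1)) * ε else 0 := by
      intro n
      by_cases h : n = f i <;> simp [h, Finset.sum_ite_eq, Finset.sum_ite_eq']
    simp_rw [h1]
    simp [Finset.sum_ite_eq, Finset.sum_ite_eq']
  have hT2 : ∀ i : Fin (k + 3),
      (∑ n, ∑ m, if n = f (i + 1) ∧ m = f i then P.c n m * ε else 0)
        = P.c (f (i + 1)) (f i) * ε := by
    intro i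
    have h1 : ∀ n, (∑ m, if n = f (i + 1) ∧ m = f i then P.c n m * ε else 0)
        = if n = f (i + 1) then P.c n (f i) * ε else 0 := by
      intro n
      by_cases h : n = f (i + 1) <;> simp [h, Finset.sum_ite_eq, Finset.sum_ite_eq']
    simp_rw [h1]
    simp [Finset.sum_ite_eq, Finset.sum_ite_eq']
  have hTA : ∑ n, ∑ m, P.c n m * A m n
      = ∑ i : Fin (k + 3), P.c (f i) (f (i + 1)) * ε := by
    simp_rw [hA, Finset.mul_sum, mul_ite, mul_zero]
    calc (∑ n, ∑ m, ∑ i : Fin (k + 3), if m = f (i + 1) ∧ n = f i then P.c n m * ε else 0)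
        = ∑ n, ∑ i : Fin (k + 3), ∑ m, if m = f (i + 1) ∧ n = f i then P.c n m * ε else 0 :=
          Finset.sum_congr rfl fun n _ => Finset.sum_comm
      _ = ∑ i : Fin (k + 3), ∑ n, ∑ m, if m = f (i + 1) ∧ n = f i then P.c n m * ε else 0 :=
          Finset.sum_comm
      _ = ∑ i : Fin (k + 3), P.c (f i) (f (i + 1)) * ε :=
          Finset.sum_congr rfl fun i _ => hT1 i
  have hTB : ∑ n, ∑ m, P.c n m * A n m
      = ∑ i : Fin (k + 3), P.c (f (i + 1)) (f i) * ε := by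
    simp_rw [hA, Finset.mul_sum, mul_ite, mul_zero]
    calc (∑ n, ∑ m, ∑ i : Fin (k + 3), if n = f (i + 1) ∧ m = f i then P.c n m * ε else 0)
        = ∑ n, ∑ i : Fin (k + 3), ∑ m, if n = f (i + 1) ∧ m = f i then P.c n m * ε else 0 :=
          Finset.sum_congr rfl fun n _ => Finset.sum_comm
      _ = ∑ i : Fin (k + 3), ∑ n, ∑ m, if n = f (i + 1) ∧ m = f i then P.c n m * ε else 0 :=
          Finset.sum_comm
      _ = ∑ i : Fin (k + 3), P.c (f (i + 1)) (f i) * ε :=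
          Finset.sum_congr rfl fun i _ => hT2 i
  have hTsum : ∑ n, ∑ m, P.c n m * (A m n - A n m)
      = (∑ i : Fin (k + 3), (P.c (f i) (f (i + 1)) - P.c (f (i + 1)) (f i))) * ε := by
    have hsplit : ∀ n, ∑ m, P.c n m * (A m n - A n m)
        = (∑ m, P.c n m * A m n) - ∑ m, P.c n m * A n m := by
      intro n
      rw [← Finset.sum_sub_distrib]
      exact Finset.sum_congr rfl fun m _ => by ring
    simp_rw [hsplit]
    rw [Finset.sum_sub_distrib, hTA, hTB, ← Finset.sum_sub_distrib, Finset.sum_mul]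
    exact Finset.sum_congr rfl fun i _ => by ring
  have herase : ∀ n, ∑ m ∈ Finset.univ.erase n, P.c n m * (A m n - A n m)
      = ∑ m, P.c n m * (A m n - A n m) := by
    intro n
    exact Finset.sum_erase _ (by rw [sub_self, mul_zero])
  have hsw : P.SW D G q' = P.SW D G q
      - ∑ n, ∑ m ∈ Finset.univ.erase n, P.c n m * (A m n - A n m) := by
    unfold MarketParams.SW MarketParams.util
    rw [eq_sub_iff_add_eq, ← Finset.sum_add_distrib]
    refine Finset.sum_congr rfl fun n _ => ?_
    have hx : ∑ m ∈ Finset.univ.erase n, P.c n m * q' m n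
        = ∑ m ∈ Finset.univ.erase n, P.c n m * q m n
          + ∑ m ∈ Finset.univ.erase n, P.c n m * (A m n - A n m) := by
      rw [← Finset.sum_add_distrib]
      refine Finset.sum_congr rfl fun m _ => ?_
      rw [hq'app]; ring
    rw [hx]; ring
  have hgt : P.SW D G q < P.SW D G q' := by
    rw [hsw]
    have : ∑ n, ∑ m ∈ Finset.univ.erase n, P.c n m * (A m n - A n m)
        = (∑ i : Fin (k + 3), (P.c (f i) (f (i + 1)) - P.c (f (i + 1)) (f i))) * ε := by
      rw [Finset.sum_congr rfl fun n _ => herase n, hTsum]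
    rw [this]
    nlinarith
  exact absurd (hmax D G q' hfeas') (not_le.mpr hgt)

/-- if the preference-difference matrix `C̃_{nm} = c_{nm} − c_{mn}` has a
strictly negative cycle of length `k > 2` (here `k+3` with `k : ℕ`), then at any optimal
centralized solution some trade opposed to the cycle is at full capacity; symmetrically,
a strictly positive cycle forces some trade along the cycle to be at full capacity. -/
theorem stmt4 {N : Type*} [Fintype N] [DecidableEq N] (P : MarketParams N)
    (hta : ∀ n, 0 < P.ta n) (ha : ∀ n, 0 < P.a n)
    (D G : N → ℝ) (q : N → N → ℝ) (hopt : P.IsOptimal D G q)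
    (k : ℕ) (f : Fin (k + 3) → N) (hinj : Function.Injective f) :
    ((∑ i : Fin (k + 3), (P.c (f i) (f (i + 1)) - P.c (f (i + 1)) (f i)) < 0) →
      ∃ i : Fin (k + 3), q (f (i + 1)) (f i) = P.κ (f (i + 1)) (f i)) ∧
    ((0 < ∑ i : Fin (k + 3), (P.c (f i) (f (i + 1)) - P.c (f (i + 1)) (f i))) →
      ∃ i : Fin (k + 3), q (f i) (f (i + 1)) = P.κ (f i) (f (i + 1))) := by
  constructor
  · exact fun h => cycle_neg P D G q hopt k f hinj h
  · intro hpos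
    set g : Fin (k + 3) → N := fun i => f (-i) with hg
    have hginj : Function.Injective g := fun i j h => by
      have := hinj h
      exact neg_injective this
    have hgsum : ∑ i : Fin (k + 3), (P.c (g i) (g (i + 1)) - P.c (g (i + 1)) (g i)) < 0 := by
      have heq : ∑ i : Fin (k + 3), (P.c (g i) (g (i + 1)) - P.c (g (i + 1)) (g i))
          = ∑ j : Fin (k + 3), -(P.c (f j) (f (j + 1)) - P.c (f (j + 1)) (f j)) := by
        refine Fintype.sum_equiv
          ⟨fun i => -i - 1, fun i => -i - 1,
            fun i => by show -(-i - 1) - 1 = i; abel,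
            fun i => by show -(-i - 1) - 1 = i; abel⟩ _ _ fun i => ?_
        simp only [Equiv.coe_fn_mk]
        have h1 : g i = f (-i - 1 + 1) := by
          rw [hg]; show f (-i) = f (-i - 1 + 1); congr 1; abel
        have h2 : g (i + 1) = f (-i - 1) := by
          rw [hg]; show f (-(i + 1)) = f (-i - 1); congr 1; abel
        rw [h1, h2]; ring
      rw [heq, Finset.sum_neg_distrib]
      linarith
    obtain ⟨i, hi⟩ := cycle_neg P D G q hopt k g hginj hgsum
    refine ⟨-i - 1, ?_⟩
    have h1 : g (i + 1) = f (-i - 1) := by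
      rw [hg]; show f (-(i + 1)) = f (-i - 1); congr 1; abel
    have h2 : g i = f (-i - 1 + 1) := by
      rw [hg]; show f (-i) = f (-i - 1 + 1); congr 1; abel
    rw [h1, h2] at hi
    exact hi
end

section
/- The set of Variational Equilibria of the peer-to-peer market game (Generalized Nash Equilibria in which the multipliers of each shared reciprocity constraint are equal across the two agents sharing it, ζ_{nm} = ζ_{mn}) coincides with the set of maximizers of the social welfare SW = Σ_n Π_n over the joint feasible set. -/
set_option linter.unusedSectionVars false


open Finset

/-- Elementary Farkas lemma for a bilinear pairing on a real vector space. -/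
theorem myFarkas {E : Type*} [AddCommGroup E] [Module ℝ E] {γ : Type*}
    (dot : E → E → ℝ)
    (hsub : ∀ x y d, dot (x - y) d = dot x d - dot y d)
    (hsmul : ∀ (c : ℝ) x d, dot (c • x) d = c * dot x d)
    (hsubr : ∀ x y d, dot d (x - y) = dot d x - dot d y)
    (hsmulr : ∀ (c : ℝ) x d, dot d (c • x) = c * dot d x)
    (hpos : ∀ b : E, b ≠ 0 → 0 < dot b b) :
    ∀ (s : Finset γ) (a : γ → E) (b : E),
      (∃ y : γ → ℝ, (∀ i, 0 ≤ y i) ∧ b = ∑ i ∈ s, y i • a i) ∨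
      (∃ d : E, (∀ i ∈ s, dot (a i) d ≤ 0) ∧ 0 < dot b d) := by
  classical
  intro s
  induction s using Finset.induction_on with
  | empty =>
    intro a b
    by_cases hb : b = 0
    · exact Or.inl ⟨fun _ => 0, fun _ => le_refl 0, by simp [hb]⟩
    · exact Or.inr ⟨b, by simp, hpos b hb⟩
  | @insert k s' hk IH =>
    intro a b
    rcases IH a b with ⟨y, hy, hrep⟩ | ⟨d, hd, hbd⟩
    · refine Or.inl ⟨fun i => if i ∈ s' then y i else 0, fun i => by
        by_cases h : i ∈ s' <;> simp [h, hy i], ?_⟩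
      rw [Finset.sum_insert hk]
      simp only [hk, if_false, zero_smul, zero_add]
      rw [hrep]
      exact Finset.sum_congr rfl fun i hi => by simp [hi]
    · by_cases hak : dot (a k) d ≤ 0
      · refine Or.inr ⟨d, ?_, hbd⟩
        intro i hi
        rcases Finset.mem_insert.mp hi with h | h
        · exact h ▸ hak
        · exact hd i h
      · push_neg at hak
        set α := dot (a k) d with hα
        set ah : γ → E := fun i => a i - (dot (a i) d / α) • a k with hah
        set bh : E := b - (dot b d / α) • a k with hbh
        rcases IH ah bh with ⟨y, hy, hrep⟩ | ⟨e, he, hbe⟩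
        · -- representation case
          refine Or.inl ⟨fun i => if i = k then
              (dot b d - ∑ i ∈ s', y i * dot (a i) d) / α
            else if i ∈ s' then y i else 0, ?_, ?_⟩
          · intro i
            by_cases h1 : i = k
            · simp only [h1, if_true]
              apply div_nonneg _ hak.le
              have hsum : ∑ i ∈ s', y i * dot (a i) d ≤ 0 := Finset.sum_nonpos
                (fun i hi => mul_nonpos_of_nonneg_of_nonpos (hy i) (hd i hi))
              linarith
            · by_cases h2 : i ∈ s' <;> simp [h1, h2, hy i]
          · rw [Finset.sum_insert hk]
            have hs' : ∀ i ∈ s', (if i = k then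
                (dot b d - ∑ i ∈ s', y i * dot (a i) d) / α
              else if i ∈ s' then y i else 0) • a i = y i • a i := by
              intro i hi
              have : i ≠ k := fun h => hk (h ▸ hi)
              simp [this, hi]
            rw [Finset.sum_congr rfl hs']
            simp only [if_true]
            have hexp : ∑ i ∈ s', y i • ah i
                = ∑ i ∈ s', y i • a i - (∑ i ∈ s', y i * (dot (a i) d / α)) • a k := by
              rw [Finset.sum_smul, ← Finset.sum_sub_distrib]
              exact Finset.sum_congr rfl fun i hi => by rw [smul_sub, smul_smul]
            have hb' : b = bh + (dot b d / α) • a k := by rw [hbh]; abel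
            have hco : (dot b d - ∑ i ∈ s', y i * dot (a i) d) / α
                = dot b d / α - ∑ i ∈ s', y i * (dot (a i) d / α) := by
              rw [sub_div, Finset.sum_div]
              congr 1
              exact Finset.sum_congr rfl fun i _ => by ring
            rw [hco, sub_smul]
            conv_lhs => rw [hb', hrep, hexp]
            abel
        · -- separation case
          have hdot : ∀ x : E, dot x (e - (dot (a k) e / α) • d)
              = dot x e - (dot (a k) e / α) * dot x d := by
            intro x; rw [hsubr, hsmulr]
          refine Or.inr ⟨e - (dot (a k) e / α) • d, ?_, ?_⟩
          · intro i hi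
            rcases Finset.mem_insert.mp hi with h | h
            · rw [h, hdot]
              have hαne : α ≠ 0 := ne_of_gt hak
              rw [← hα]
              field_simp
              simp
            · have h1 : dot (ah i) e ≤ 0 := he i h
              rw [hah] at h1
              simp only at h1
              rw [hsub, hsmul] at h1
              rw [hdot]
              have heq : dot (a i) d / α * dot (a k) e
                  = dot (a k) e / α * dot (a i) d := by ring
              linarith
          · rw [hdot]
            rw [hbh] at hbe
            rw [hsub, hsmul] at hbe
            have heq : dot b d / α * dot (a k) e
                = dot (a k) e / α * dot b d := by ring
            linarith

namespace MarketParams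

variable {N : Type*} [Fintype N] [DecidableEq N]

/-- Feasibility of agent `n`'s own decisions `(Dn, Gn, qn)` given the other agents'
trades `q`: individual bounds, capacity constraints, shared reciprocity constraints
`q_{mn} ≤ −q_{nm}` and agent `n`'s nodal balance. -/
def AgentFeas (P : MarketParams N) (q : N → N → ℝ) (n : N)
    (Dn Gn : ℝ) (qn : N → ℝ) : Prop :=
  (P.Dlow n ≤ Dn ∧ Dn ≤ P.Dbar n) ∧
  (P.Glow n ≤ Gn ∧ Gn ≤ P.Gbar n) ∧
  (∀ m, m ≠ n → qn m ≤ P.κ m n) ∧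
  (∀ m, m ≠ n → qn m ≤ -(q n m)) ∧
  Dn = Gn + P.dG n + ∑ m ∈ Finset.univ.erase n, qn m

/-- Generalized Nash Equilibrium of the peer-to-peer game: each agent's decisions are
feasible and maximize her own utility given the others' decisions. -/
def IsGNE (P : MarketParams N) (D G : N → ℝ) (q : N → N → ℝ) : Prop :=
  ∀ n, P.AgentFeas q n (D n) (G n) (fun m => q m n) ∧
    ∀ Dn Gn qn, P.AgentFeas q n Dn Gn qn →
      P.util n Dn Gn qn ≤ P.util n (D n) (G n) (fun m => q m n)

end MarketParams

namespace MarketParams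

variable {N : Type*} [Fintype N] [DecidableEq N]

/-- Aggregated KKT system of the market: primal feasibility, stationarity in
`D_n`, `G_n` and `q_{mn}`, and the complementarity conditions, with multipliers
`μ` (demand bounds), `ν` (generation bounds), `λ` (balance), `ξ` (capacities)
and `ζ` (shared reciprocity constraints, one valuation `ζ n m` per agent `n`). -/
def KKT (P : MarketParams N) (D G : N → ℝ) (q : N → N → ℝ)
    (μl μu νl νu lam : N → ℝ) (ξ ζ : N → N → ℝ) : Prop :=
  P.Feas D G q ∧
  (∀ n, 2 * P.ta n * (D n - P.Dstar n) - μl n + μu n + lam n = 0) ∧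
  (∀ n, P.a n * G n + P.b n - νl n + νu n - lam n = 0) ∧
  (∀ n m, m ≠ n → P.c n m + ξ n m + ζ n m - lam n = 0) ∧
  (∀ n, 0 ≤ μl n ∧ μl n * (D n - P.Dlow n) = 0) ∧
  (∀ n, 0 ≤ μu n ∧ μu n * (P.Dbar n - D n) = 0) ∧
  (∀ n, 0 ≤ νl n ∧ νl n * (G n - P.Glow n) = 0) ∧
  (∀ n, 0 ≤ νu n ∧ νu n * (P.Gbar n - G n) = 0) ∧
  (∀ n m, m ≠ n → 0 ≤ ξ n m ∧ ξ n m * (P.κ m n - q m n) = 0) ∧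
  (∀ n m, m ≠ n → 0 ≤ ζ n m ∧ ζ n m * (-(q m n) - q n m) = 0)

/-- A Variational Equilibrium: a Generalized Nash Equilibrium (each agent's KKT system
holds) in which the multipliers of each shared reciprocity constraint are equal across
the two agents sharing it: `ζ n m = ζ m n`. -/
def IsVE (P : MarketParams N) (D G : N → ℝ) (q : N → N → ℝ) : Prop :=
  ∃ μl μu νl νu lam ξ ζ,
    P.KKT D G q μl μu νl νu lam ξ ζ ∧ ∀ n m, ζ n m = ζ m n

end MarketParams


section Helpers

open Finset

variable {N : Type*} [Fintype N] [DecidableEq N]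

lemma sum_erase_swap (f : N → N → ℝ) :
    ∑ n, ∑ m ∈ Finset.univ.erase n, f n m
      = ∑ n, ∑ m ∈ Finset.univ.erase n, f m n := by
  have key : ∀ g : N → N → ℝ, ∑ n, ∑ m ∈ Finset.univ.erase n, g n m
      = ∑ n, ∑ m, (if m = n then 0 else g n m) := by
    intro g
    refine Finset.sum_congr rfl fun n _ => ?_
    rw [← Finset.sum_erase (f := fun m => if m = n then (0:ℝ) else g n m) (a := n) Finset.univ (by simp)]
    refine Finset.sum_congr rfl fun m hm => ?_
    simp [(Finset.mem_erase.mp hm).1]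
  rw [key, key (fun n m => f m n)]
  rw [Finset.sum_comm]
  refine Finset.sum_congr rfl fun n _ => Finset.sum_congr rfl fun m _ => ?_
  by_cases h : m = n
  · simp [h]
  · simp [h, Ne.symm h]

lemma sum_erase_eq_sum_ite (n : N) (g : N → ℝ) :
    ∑ m ∈ Finset.univ.erase n, g m = ∑ m, if m = n then 0 else g m := by
  rw [← Finset.sum_erase (f := fun m => if m = n then (0:ℝ) else g m) (a := n) Finset.univ (by simp)]
  exact Finset.sum_congr rfl fun m hm => by simp [(Finset.mem_erase.mp hm).1]

lemma helper_low {μ x l x' : ℝ} (hμ : 0 ≤ μ) (hc : μ * (x - l) = 0) (h' : l ≤ x') :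
    0 ≤ μ * (x' - x) := by nlinarith [mul_nonneg hμ (sub_nonneg.mpr h')]

lemma helper_up {μ x u x' : ℝ} (hμ : 0 ≤ μ) (hc : μ * (u - x) = 0) (h' : x' ≤ u) :
    μ * (x' - x) ≤ 0 := by nlinarith [mul_nonneg hμ (sub_nonneg.mpr h')]

end Helpers

namespace MarketParams

open Finset

variable {N : Type*} [Fintype N] [DecidableEq N]

lemma SW_diff (P : MarketParams N) (D G : N → ℝ) (q : N → N → ℝ)
    (D' G' : N → ℝ) (q' : N → N → ℝ) :
    P.SW D' G' q' = P.SW D G q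
      + ∑ n, ((-(2 * P.ta n * (D n - P.Dstar n))) * (D' n - D n)
          + (-(P.a n * G n + P.b n)) * (G' n - G n)
          + ∑ m ∈ Finset.univ.erase n, (-(P.c n m)) * (q' m n - q m n))
      - ∑ n, (P.ta n * (D' n - D n) ^ 2 + P.a n / 2 * (G' n - G n) ^ 2) := by
  unfold SW
  rw [← Finset.sum_add_distrib, ← Finset.sum_sub_distrib]
  refine Finset.sum_congr rfl fun n _ => ?_
  unfold util
  have hq : ∑ m ∈ Finset.univ.erase n, (-(P.c n m)) * (q' m n - q m n)
      = (∑ m ∈ Finset.univ.erase n, P.c n m * q m n)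
        - ∑ m ∈ Finset.univ.erase n, P.c n m * q' m n := by
    rw [← Finset.sum_sub_distrib]
    exact Finset.sum_congr rfl fun m _ => by ring
  rw [hq]
  ring

lemma kkt_imp_opt (P : MarketParams N)
    (hta : ∀ n, 0 < P.ta n) (ha : ∀ n, 0 < P.a n)
    {D G : N → ℝ} {q : N → N → ℝ} {μl μu νl νu lam : N → ℝ} {ξ ζ : N → N → ℝ}
    (hK : P.KKT D G q μl μu νl νu lam ξ ζ) (hsym : ∀ n m, ζ n m = ζ m n)
    {D' G' : N → ℝ} {q' : N → N → ℝ} (hF' : P.Feas D' G' q') :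
    P.SW D' G' q' ≤ P.SW D G q := by
  obtain ⟨hF, hsD, hsG, hsq, hμl, hμu, hνl, hνu, hξ, hζ⟩ := hK
  rw [P.SW_diff D G q D' G' q']
  have hQ : 0 ≤ ∑ n, (P.ta n * (D' n - D n) ^ 2 + P.a n / 2 * (G' n - G n) ^ 2) := by
    refine Finset.sum_nonneg fun n _ => ?_
    have := (hta n).le
    have := (ha n).le
    positivity
  -- per-agent bound
  have hn : ∀ n, (-(2 * P.ta n * (D n - P.Dstar n))) * (D' n - D n)
      + (-(P.a n * G n + P.b n)) * (G' n - G n)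
      + ∑ m ∈ Finset.univ.erase n, (-(P.c n m)) * (q' m n - q m n)
      ≤ ∑ m ∈ Finset.univ.erase n, ζ n m * (q' m n - q m n) := by
    intro n
    have e1 : -(2 * P.ta n * (D n - P.Dstar n)) = -μl n + μu n + lam n := by
      linarith [hsD n]
    have e2 : -(P.a n * G n + P.b n) = νu n - νl n - lam n := by
      linarith [hsG n]
    have e3 : ∀ m ∈ Finset.univ.erase n, (-(P.c n m)) * (q' m n - q m n)
        = ξ n m * (q' m n - q m n) + ζ n m * (q' m n - q m n)
          + (-(lam n)) * (q' m n - q m n) := by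
      intro m hm
      have hmn : m ≠ n := (Finset.mem_erase.mp hm).1
      have : -(P.c n m) = ξ n m + ζ n m - lam n := by linarith [hsq n m hmn]
      rw [this]; ring
    rw [e1, e2, Finset.sum_congr rfl e3]
    rw [Finset.sum_add_distrib, Finset.sum_add_distrib]
    have hbal : ∑ m ∈ Finset.univ.erase n, (q' m n - q m n) = (D' n - D n) - (G' n - G n) := by
      have b1 := hF.2.2.2.2 n
      have b2 := hF'.2.2.2.2 n
      rw [Finset.sum_sub_distrib]
      linarith
    have hlam : ∑ m ∈ Finset.univ.erase n, (-(lam n)) * (q' m n - q m n)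
        = (-(lam n)) * ((D' n - D n) - (G' n - G n)) := by
      rw [← Finset.mul_sum, hbal]
    rw [hlam]
    have hξs : ∑ m ∈ Finset.univ.erase n, ξ n m * (q' m n - q m n) ≤ 0 := by
      refine Finset.sum_nonpos fun m hm => ?_
      have hmn : m ≠ n := (Finset.mem_erase.mp hm).1
      exact helper_up (hξ n m hmn).1 (hξ n m hmn).2 (hF'.2.2.1 n m hmn)
    have h1 : 0 ≤ μl n * (D' n - D n) := helper_low (hμl n).1 (hμl n).2 (hF'.1 n).1
    have h2 : μu n * (D' n - D n) ≤ 0 := helper_up (hμu n).1 (hμu n).2 (hF'.1 n).2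
    have h3 : 0 ≤ νl n * (G' n - G n) := helper_low (hνl n).1 (hνl n).2 (hF'.2.1 n).1
    have h4 : νu n * (G' n - G n) ≤ 0 := helper_up (hνu n).1 (hνu n).2 (hF'.2.1 n).2
    nlinarith [hξs, h1, h2, h3, h4]
  have hZ : ∑ n, ∑ m ∈ Finset.univ.erase n, ζ n m * (q' m n - q m n) ≤ 0 := by
    have hswap : ∑ n, ∑ m ∈ Finset.univ.erase n, ζ n m * (q' m n - q m n)
        = ∑ n, ∑ m ∈ Finset.univ.erase n, ζ n m * (q' n m - q n m) := by
      rw [sum_erase_swap (fun n m => ζ n m * (q' m n - q m n))]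
      refine Finset.sum_congr rfl fun n _ => Finset.sum_congr rfl fun m _ => ?_
      rw [hsym n m]
    have h2 : (2:ℝ) * (∑ n, ∑ m ∈ Finset.univ.erase n, ζ n m * (q' m n - q m n))
        = ∑ n, ∑ m ∈ Finset.univ.erase n,
            ζ n m * ((q' m n + q' n m) - (q m n + q n m)) := by
      rw [two_mul]
      nth_rewrite 2 [hswap]
      rw [← Finset.sum_add_distrib]
      refine Finset.sum_congr rfl fun n _ => ?_
      rw [← Finset.sum_add_distrib]
      exact Finset.sum_congr rfl fun m _ => by ring
    have h3 : ∑ n, ∑ m ∈ Finset.univ.erase n,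
        ζ n m * ((q' m n + q' n m) - (q m n + q n m)) ≤ 0 := by
      refine Finset.sum_nonpos fun n _ => Finset.sum_nonpos fun m hm => ?_
      have hmn : m ≠ n := (Finset.mem_erase.mp hm).1
      have hz := hζ n m hmn
      have h' : q' m n + q' n m ≤ 0 := hF'.2.2.2.1 n m hmn
      nlinarith [hz.1, hz.2, mul_nonpos_of_nonneg_of_nonpos hz.1 h']
    linarith
  have hL : ∑ n, ((-(2 * P.ta n * (D n - P.Dstar n))) * (D' n - D n)
      + (-(P.a n * G n + P.b n)) * (G' n - G n)
      + ∑ m ∈ Finset.univ.erase n, (-(P.c n m)) * (q' m n - q m n)) ≤ 0 :=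
    le_trans (Finset.sum_le_sum fun n _ => hn n) hZ
  linarith

end MarketParams

namespace MarketParams

open Finset

variable {N : Type*} [Fintype N] [DecidableEq N]

/-- Ambient vector space for the centralized problem. -/
abbrev EV (N : Type*) := (N → ℝ) × (N → ℝ) × (N → N → ℝ)

noncomputable def dotE (x y : EV N) : ℝ :=
  (∑ n, x.1 n * y.1 n) + (∑ n, x.2.1 n * y.2.1 n) + ∑ m, ∑ n, x.2.2 m n * y.2.2 m n

lemma fst_sumEV {ι α β : Type*} [AddCommMonoid α] [AddCommMonoid β]
    (s : Finset ι) (f : ι → α × β) :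
    (∑ i ∈ s, f i).1 = ∑ i ∈ s, (f i).1 :=
  map_sum (AddMonoidHom.fst _ _) f s

lemma snd_sumEV {ι α β : Type*} [AddCommMonoid α] [AddCommMonoid β]
    (s : Finset ι) (f : ι → α × β) :
    (∑ i ∈ s, f i).2 = ∑ i ∈ s, (f i).2 :=
  map_sum (AddMonoidHom.snd _ _) f s

lemma dotE_sub_left (x y d : EV N) : dotE (x - y) d = dotE x d - dotE y d := by
  unfold dotE
  simp only [Prod.fst_sub, Prod.snd_sub, Pi.sub_apply, sub_mul]
  rw [Finset.sum_sub_distrib, Finset.sum_sub_distrib]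
  have : ∑ m, ∑ n, (x.2.2 m n * d.2.2 m n - y.2.2 m n * d.2.2 m n)
      = (∑ m, ∑ n, x.2.2 m n * d.2.2 m n) - ∑ m, ∑ n, y.2.2 m n * d.2.2 m n := by
    rw [← Finset.sum_sub_distrib]
    exact Finset.sum_congr rfl fun m _ => by rw [← Finset.sum_sub_distrib]
  rw [this]; ring

lemma dotE_smul_left (c : ℝ) (x d : EV N) : dotE (c • x) d = c * dotE x d := by
  unfold dotE
  simp only [Prod.smul_fst, Prod.smul_snd, Pi.smul_apply, smul_eq_mul]
  rw [mul_add, mul_add, Finset.mul_sum, Finset.mul_sum, Finset.mul_sum]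
  congr 1
  congr 1
  · exact Finset.sum_congr rfl fun n _ => by ring
  · exact Finset.sum_congr rfl fun n _ => by ring
  · refine Finset.sum_congr rfl fun m _ => ?_
    rw [Finset.mul_sum]
    exact Finset.sum_congr rfl fun n _ => by ring

lemma dotE_add_right (x y d : EV N) : dotE d (x + y) = dotE d x + dotE d y := by
  unfold dotE
  simp only [Prod.fst_add, Prod.snd_add, Pi.add_apply, mul_add]
  rw [Finset.sum_add_distrib, Finset.sum_add_distrib]
  have : ∑ m, ∑ n, (d.2.2 m n * x.2.2 m n + d.2.2 m n * y.2.2 m n)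
      = (∑ m, ∑ n, d.2.2 m n * x.2.2 m n) + ∑ m, ∑ n, d.2.2 m n * y.2.2 m n := by
    rw [← Finset.sum_add_distrib]
    exact Finset.sum_congr rfl fun m _ => by rw [← Finset.sum_add_distrib]
  rw [this]; ring

lemma dotE_sub_right (x y d : EV N) : dotE d (x - y) = dotE d x - dotE d y := by
  unfold dotE
  simp only [Prod.fst_sub, Prod.snd_sub, Pi.sub_apply, mul_sub]
  rw [Finset.sum_sub_distrib, Finset.sum_sub_distrib]
  have : ∑ m, ∑ n, (d.2.2 m n * x.2.2 m n - d.2.2 m n * y.2.2 m n)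
      = (∑ m, ∑ n, d.2.2 m n * x.2.2 m n) - ∑ m, ∑ n, d.2.2 m n * y.2.2 m n := by
    rw [← Finset.sum_sub_distrib]
    exact Finset.sum_congr rfl fun m _ => by rw [← Finset.sum_sub_distrib]
  rw [this]; ring

lemma dotE_smul_right (c : ℝ) (x d : EV N) : dotE d (c • x) = c * dotE d x := by
  unfold dotE
  simp only [Prod.smul_fst, Prod.smul_snd, Pi.smul_apply, smul_eq_mul]
  rw [mul_add, mul_add, Finset.mul_sum, Finset.mul_sum, Finset.mul_sum]
  congr 1
  congr 1
  · exact Finset.sum_congr rfl fun n _ => by ring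
  · exact Finset.sum_congr rfl fun n _ => by ring
  · refine Finset.sum_congr rfl fun m _ => ?_
    rw [Finset.mul_sum]
    exact Finset.sum_congr rfl fun n _ => by ring

lemma dotE_posdef (x : EV N) (hx : x ≠ 0) : 0 < dotE x x := by
  unfold dotE
  have h1 : (0:ℝ) ≤ ∑ n, x.1 n * x.1 n := Finset.sum_nonneg fun n _ => mul_self_nonneg _
  have h2 : (0:ℝ) ≤ ∑ n, x.2.1 n * x.2.1 n := Finset.sum_nonneg fun n _ => mul_self_nonneg _
  have h3 : (0:ℝ) ≤ ∑ m, ∑ n, x.2.2 m n * x.2.2 m n :=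
    Finset.sum_nonneg fun m _ => Finset.sum_nonneg fun n _ => mul_self_nonneg _
  have : x.1 ≠ 0 ∨ x.2.1 ≠ 0 ∨ x.2.2 ≠ 0 := by
    by_contra h
    push_neg at h
    exact hx (Prod.ext h.1 (Prod.ext h.2.1 h.2.2))
  rcases this with h | h | h
  · obtain ⟨n, hn⟩ := Function.ne_iff.mp h
    have : 0 < ∑ n, x.1 n * x.1 n :=
      lt_of_lt_of_le (mul_self_pos.mpr hn)
        (Finset.single_le_sum (fun i _ => mul_self_nonneg (x.1 i)) (Finset.mem_univ n))
    linarith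
  · obtain ⟨n, hn⟩ := Function.ne_iff.mp h
    have : 0 < ∑ n, x.2.1 n * x.2.1 n :=
      lt_of_lt_of_le (mul_self_pos.mpr hn)
        (Finset.single_le_sum (fun i _ => mul_self_nonneg (x.2.1 i)) (Finset.mem_univ n))
    linarith
  · obtain ⟨m, hm⟩ := Function.ne_iff.mp h
    obtain ⟨n, hn⟩ := Function.ne_iff.mp hm
    have hrow : 0 < ∑ k, x.2.2 m k * x.2.2 m k :=
      lt_of_lt_of_le (mul_self_pos.mpr hn)
        (Finset.single_le_sum (fun i _ => mul_self_nonneg (x.2.2 m i)) (Finset.mem_univ n))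
    have : 0 < ∑ a, ∑ k, x.2.2 a k * x.2.2 a k :=
      lt_of_lt_of_le hrow
        (Finset.single_le_sum
          (fun i _ => Finset.sum_nonneg fun k _ => mul_self_nonneg (x.2.2 i k))
          (Finset.mem_univ m))
    linarith

/-- Constraint index type. -/
abbrev CIdx (N : Type*) := ((N ⊕ N) ⊕ (N ⊕ N)) ⊕ ((N × N ⊕ N × N) ⊕ (N ⊕ N))

def idl (n : N) : CIdx N := Sum.inl (Sum.inl (Sum.inl n))
def idu (n : N) : CIdx N := Sum.inl (Sum.inl (Sum.inr n))
def igl (n : N) : CIdx N := Sum.inl (Sum.inr (Sum.inl n))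
def igu (n : N) : CIdx N := Sum.inl (Sum.inr (Sum.inr n))
def icap (m n : N) : CIdx N := Sum.inr (Sum.inl (Sum.inl (m, n)))
def itr (n m : N) : CIdx N := Sum.inr (Sum.inl (Sum.inr (n, m)))
def ibp (n : N) : CIdx N := Sum.inr (Sum.inr (Sum.inl n))
def ibm (n : N) : CIdx N := Sum.inr (Sum.inr (Sum.inr n))

/-- Basis-like vectors. -/
def vD (n : N) : EV N := (fun k => if k = n then 1 else 0, 0, 0)
def vG (n : N) : EV N := (0, fun k => if k = n then 1 else 0, 0)
def vq (m n : N) : EV N := (0, 0, fun a b => if a = m ∧ b = n then 1 else 0)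
def vrow (n : N) : EV N := (0, 0, fun a b => if b = n ∧ ¬ a = n then 1 else 0)

/-- Constraint normals. -/
noncomputable def Anor : CIdx N → EV N := fun c =>
  match c with
  | Sum.inl (Sum.inl (Sum.inl n)) => -vD n
  | Sum.inl (Sum.inl (Sum.inr n)) => vD n
  | Sum.inl (Sum.inr (Sum.inl n)) => -vG n
  | Sum.inl (Sum.inr (Sum.inr n)) => vG n
  | Sum.inr (Sum.inl (Sum.inl (m, n))) => if m = n then 0 else vq m n
  | Sum.inr (Sum.inl (Sum.inr (n, m))) => if m = n then 0 else vq m n + vq n m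
  | Sum.inr (Sum.inr (Sum.inl n)) => vD n - vG n - vrow n
  | Sum.inr (Sum.inr (Sum.inr n)) => -(vD n - vG n - vrow n)

/-- Right-hand sides. -/
noncomputable def rhsC (P : MarketParams N) : CIdx N → ℝ := fun c =>
  match c with
  | Sum.inl (Sum.inl (Sum.inl n)) => -(P.Dlow n)
  | Sum.inl (Sum.inl (Sum.inr n)) => P.Dbar n
  | Sum.inl (Sum.inr (Sum.inl n)) => -(P.Glow n)
  | Sum.inl (Sum.inr (Sum.inr n)) => P.Gbar n
  | Sum.inr (Sum.inl (Sum.inl (m, n))) => if m = n then 1 else P.κ m n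
  | Sum.inr (Sum.inl (Sum.inr (_, _))) => 0
  | Sum.inr (Sum.inr (Sum.inl n)) => P.dG n
  | Sum.inr (Sum.inr (Sum.inr n)) => -(P.dG n)

lemma dotE_zero_left (z : EV N) : dotE 0 z = 0 := by
  unfold dotE
  simp

lemma dotE_add_left (x y z : EV N) : dotE (x + y) z = dotE x z + dotE y z := by
  have h := dotE_sub_left x (-y) z
  simp only [sub_neg_eq_add] at h
  rw [h]
  have h2 := dotE_sub_left 0 y z
  simp only [zero_sub] at h2
  rw [h2, dotE_zero_left]
  ring

lemma dot_neg_left (x z : EV N) : dotE (-x) z = -(dotE x z) := by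
  have := dotE_sub_left 0 x z
  simpa [dotE_zero_left] using this

lemma dot_vD (n : N) (z : EV N) : dotE (vD n) z = z.1 n := by
  unfold dotE vD
  simp [ite_mul, Finset.sum_ite_eq']

lemma dot_vG (n : N) (z : EV N) : dotE (vG n) z = z.2.1 n := by
  unfold dotE vG
  simp [ite_mul, Finset.sum_ite_eq']

lemma dot_vq (m n : N) (z : EV N) : dotE (vq m n) z = z.2.2 m n := by
  unfold dotE vq
  have : ∀ a, ∑ b, (if a = m ∧ b = n then 1 else 0) * z.2.2 a b
      = if a = m then z.2.2 a n else 0 := by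
    intro a
    by_cases h : a = m
    · simp [h, ite_mul, Finset.sum_ite_eq']
    · simp [h]
  rw [Finset.sum_congr rfl fun a _ => this a]
  simp [Finset.sum_ite_eq']

lemma dot_vrow (n : N) (z : EV N) :
    dotE (vrow n) z = ∑ m ∈ Finset.univ.erase n, z.2.2 m n := by
  unfold dotE vrow
  have h1 : ∀ a, ∑ b, (if b = n ∧ ¬ a = n then 1 else 0) * z.2.2 a b
      = if a = n then 0 else z.2.2 a n := by
    intro a
    by_cases h : a = n
    · simp [h]
    · simp [h, ite_mul, Finset.sum_ite_eq']
  rw [Finset.sum_congr rfl fun a _ => h1 a]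
  rw [← sum_erase_eq_sum_ite]
  simp

end MarketParams

namespace MarketParams

open Finset

variable {N : Type*} [Fintype N] [DecidableEq N]

lemma dot_Anor_dl (n : N) (z : EV N) : dotE (Anor (idl n)) z = -(z.1 n) := by
  have h : Anor (idl n) = -vD n := rfl
  rw [h, dot_neg_left, dot_vD]

lemma dot_Anor_du (n : N) (z : EV N) : dotE (Anor (idu n)) z = z.1 n := by
  have h : Anor (idu n) = vD n := rfl
  rw [h, dot_vD]

lemma dot_Anor_gl (n : N) (z : EV N) : dotE (Anor (igl n)) z = -(z.2.1 n) := by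
  have h : Anor (igl n) = -vG n := rfl
  rw [h, dot_neg_left, dot_vG]

lemma dot_Anor_gu (n : N) (z : EV N) : dotE (Anor (igu n)) z = z.2.1 n := by
  have h : Anor (igu n) = vG n := rfl
  rw [h, dot_vG]

lemma dot_Anor_cap (m n : N) (z : EV N) :
    dotE (Anor (icap m n)) z = if m = n then 0 else z.2.2 m n := by
  have h : Anor (icap m n) = if m = n then 0 else vq m n := rfl
  rw [h]
  by_cases hmn : m = n
  · simp [hmn, dotE_zero_left]
  · simp [hmn, dot_vq]

lemma dot_Anor_tr (n m : N) (z : EV N) :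
    dotE (Anor (itr n m)) z = if m = n then 0 else z.2.2 m n + z.2.2 n m := by
  have h : Anor (itr n m) = if m = n then 0 else vq m n + vq n m := rfl
  rw [h]
  by_cases hmn : m = n
  · simp [hmn, dotE_zero_left]
  · simp [hmn, dotE_add_left, dot_vq]

lemma dot_Anor_bp (n : N) (z : EV N) :
    dotE (Anor (ibp n)) z = z.1 n - z.2.1 n - ∑ m ∈ Finset.univ.erase n, z.2.2 m n := by
  have h : Anor (ibp n) = vD n - vG n - vrow n := rfl
  rw [h, dotE_sub_left, dotE_sub_left, dot_vD, dot_vG, dot_vrow]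

lemma dot_Anor_bm (n : N) (z : EV N) :
    dotE (Anor (ibm n)) z
      = -(z.1 n - z.2.1 n - ∑ m ∈ Finset.univ.erase n, z.2.2 m n) := by
  have h : Anor (ibm n) = -(vD n - vG n - vrow n) := rfl
  rw [h, dot_neg_left, dotE_sub_left, dotE_sub_left, dot_vD, dot_vG, dot_vrow]

lemma feas_iff (P : MarketParams N) (z : EV N) :
    P.Feas z.1 z.2.1 z.2.2 ↔ ∀ c, dotE (Anor c) z ≤ P.rhsC c := by
  constructor
  · rintro ⟨h1, h2, h3, h4, h5⟩ c
    rcases c with ((n | n) | (n | n)) | ((⟨m, n⟩ | ⟨n, m⟩) | (n | n))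
    · show dotE (Anor (idl n)) z ≤ P.rhsC (idl n)
      rw [dot_Anor_dl]
      show _ ≤ -(P.Dlow n)
      linarith [(h1 n).1]
    · show dotE (Anor (idu n)) z ≤ P.rhsC (idu n)
      rw [dot_Anor_du]
      exact (h1 n).2
    · show dotE (Anor (igl n)) z ≤ P.rhsC (igl n)
      rw [dot_Anor_gl]
      show _ ≤ -(P.Glow n)
      linarith [(h2 n).1]
    · show dotE (Anor (igu n)) z ≤ P.rhsC (igu n)
      rw [dot_Anor_gu]
      exact (h2 n).2
    · show dotE (Anor (icap m n)) z ≤ P.rhsC (icap m n)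
      rw [dot_Anor_cap]
      show _ ≤ if m = n then 1 else P.κ m n
      by_cases hmn : m = n
      · simp [hmn]
      · simpa [hmn] using h3 n m hmn
    · show dotE (Anor (itr n m)) z ≤ P.rhsC (itr n m)
      rw [dot_Anor_tr]
      show _ ≤ (0:ℝ)
      by_cases hmn : m = n
      · simp [hmn]
      · simpa [hmn] using h4 n m hmn
    · show dotE (Anor (ibp n)) z ≤ P.rhsC (ibp n)
      rw [dot_Anor_bp]
      show _ ≤ P.dG n
      linarith [h5 n]
    · show dotE (Anor (ibm n)) z ≤ P.rhsC (ibm n)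
      rw [dot_Anor_bm]
      show _ ≤ -(P.dG n)
      linarith [h5 n]
  · intro h
    refine ⟨fun n => ⟨?_, ?_⟩, fun n => ⟨?_, ?_⟩, fun n m hmn => ?_, fun n m hmn => ?_,
      fun n => ?_⟩
    · have := h (idl n); rw [dot_Anor_dl] at this
      have h2 : (P.rhsC (idl n)) = -(P.Dlow n) := rfl
      rw [h2] at this; linarith
    · have := h (idu n); rw [dot_Anor_du] at this
      exact this
    · have := h (igl n); rw [dot_Anor_gl] at this
      have h2 : (P.rhsC (igl n)) = -(P.Glow n) := rfl
      rw [h2] at this; linarith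
    · have := h (igu n); rw [dot_Anor_gu] at this
      exact this
    · have := h (icap m n); rw [dot_Anor_cap] at this
      have h2 : (P.rhsC (icap m n)) = if m = n then 1 else P.κ m n := rfl
      rw [h2] at this
      simpa [hmn] using this
    · have := h (itr n m); rw [dot_Anor_tr] at this
      have h2 : (P.rhsC (itr n m)) = 0 := rfl
      rw [h2] at this
      simpa [hmn] using this
    · have hp := h (ibp n); rw [dot_Anor_bp] at hp
      have hm := h (ibm n); rw [dot_Anor_bm] at hm
      have h2 : (P.rhsC (ibp n)) = P.dG n := rfl
      have h3 : (P.rhsC (ibm n)) = -(P.dG n) := rfl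
      rw [h2] at hp; rw [h3] at hm
      linarith

/-- Gradient of social welfare. -/
noncomputable def gradE (P : MarketParams N) (z : EV N) : EV N :=
  (fun n => -(2 * P.ta n * (z.1 n - P.Dstar n)),
   fun n => -(P.a n * z.2.1 n + P.b n),
   fun m n => if m = n then 0 else -(P.c n m))

noncomputable def Qf (P : MarketParams N) (u : EV N) : ℝ :=
  ∑ n, (P.ta n * (u.1 n) ^ 2 + P.a n / 2 * (u.2.1 n) ^ 2)

lemma dot_gradE (P : MarketParams N) (z u : EV N) :
    dotE (gradE P z) u
      = ∑ n, ((-(2 * P.ta n * (z.1 n - P.Dstar n))) * (u.1 n)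
          + (-(P.a n * z.2.1 n + P.b n)) * (u.2.1 n)
          + ∑ m ∈ Finset.univ.erase n, (-(P.c n m)) * (u.2.2 m n)) := by
  have hq : ∑ m, ∑ n, (if m = n then 0 else -(P.c n m)) * u.2.2 m n
      = ∑ n, ∑ m ∈ Finset.univ.erase n, (-(P.c n m)) * u.2.2 m n := by
    rw [Finset.sum_comm]
    refine Finset.sum_congr rfl fun n _ => ?_
    rw [sum_erase_eq_sum_ite n (fun m => (-(P.c n m)) * u.2.2 m n)]
    refine Finset.sum_congr rfl fun m _ => ?_
    by_cases h : m = n <;> simp [h]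
  unfold dotE gradE
  rw [Finset.sum_add_distrib, Finset.sum_add_distrib, hq]

lemma SW_diff_dot (P : MarketParams N) (z z' : EV N) :
    P.SW z'.1 z'.2.1 z'.2.2
      = P.SW z.1 z.2.1 z.2.2 + dotE (gradE P z) (z' - z) - Qf P (z' - z) := by
  rw [P.SW_diff z.1 z.2.1 z.2.2 z'.1 z'.2.1 z'.2.2, dot_gradE]
  unfold Qf
  simp only [Prod.fst_sub, Prod.snd_sub, Pi.sub_apply]

end MarketParams

namespace MarketParams

open Finset

variable {N : Type*} [Fintype N] [DecidableEq N]

lemma sum_w_D (w : CIdx N → ℝ) (n : N) :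
    ∑ c : CIdx N, w c * (Anor c).1 n
      = -(w (idl n)) + w (idu n) + (w (ibp n) - w (ibm n)) := by
  simp only [Fintype.sum_sum_type, Fintype.sum_prod_type]
  simp only [Anor, idl, idu, igl, igu, icap, itr, ibp, ibm, vD, vG, vq, vrow,
    apply_ite (fun v : EV N => v.1 n), Prod.fst_neg, Prod.fst_sub, Pi.neg_apply,
    Pi.sub_apply, Prod.fst_zero, Pi.zero_apply, mul_zero, mul_neg, mul_ite, mul_one,
    Finset.sum_const_zero, ite_self, sub_zero, zero_sub, add_zero, zero_add,
    Finset.sum_neg_distrib]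
  rw [Finset.sum_ite_eq, Finset.sum_ite_eq, Finset.sum_ite_eq, Finset.sum_ite_eq]
  simp
  ring

lemma sum_w_G (w : CIdx N → ℝ) (n : N) :
    ∑ c : CIdx N, w c * (Anor c).2.1 n
      = -(w (igl n)) + w (igu n) - (w (ibp n) - w (ibm n)) := by
  simp only [Fintype.sum_sum_type, Fintype.sum_prod_type]
  simp only [Anor, idl, idu, igl, igu, icap, itr, ibp, ibm, vD, vG, vq, vrow,
    apply_ite (fun v : EV N => v.2.1 n), Prod.snd_neg, Prod.snd_sub, Prod.fst_neg,
    Prod.fst_sub, Pi.neg_apply,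
    Pi.sub_apply, Prod.snd_zero, Prod.fst_zero, Pi.zero_apply, mul_zero, mul_neg,
    mul_ite, mul_one,
    Finset.sum_const_zero, ite_self, sub_zero, zero_sub, add_zero, zero_add,
    Finset.sum_neg_distrib]
  rw [Finset.sum_ite_eq, Finset.sum_ite_eq, Finset.sum_ite_eq, Finset.sum_ite_eq]
  simp
  ring

lemma sum_w_q (w : CIdx N → ℝ) {m n : N} (hmn : m ≠ n) :
    ∑ c : CIdx N, w c * (Anor c).2.2 m n
      = w (icap m n) + (w (itr n m) + w (itr m n)) - (w (ibp n) - w (ibm n)) := by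
  simp only [Fintype.sum_sum_type, Fintype.sum_prod_type]
  simp only [Anor, idl, idu, igl, igu, icap, itr, ibp, ibm, vD, vG, vq, vrow,
    apply_ite (fun v : EV N => v.2.2 m n), Prod.snd_neg, Prod.snd_sub, Prod.fst_neg,
    Prod.fst_sub, Pi.neg_apply, Pi.sub_apply, Prod.snd_zero, Prod.fst_zero,
    Pi.zero_apply, Pi.add_apply, Prod.snd_add, Prod.fst_add, mul_zero, mul_neg,
    mul_ite, mul_one, mul_add,
    Finset.sum_const_zero, ite_self, sub_zero, zero_sub, add_zero, zero_add,
    Finset.sum_neg_distrib]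
  have hguard1 : ∀ x x1 : N, (if x = x1 then (0:ℝ)
        else if m = x ∧ n = x1 then w (Sum.inr (Sum.inl (Sum.inl (x, x1)))) else 0)
      = if m = x ∧ n = x1 then w (Sum.inr (Sum.inl (Sum.inl (x, x1)))) else 0 := by
    intro x x1
    by_cases hc : m = x ∧ n = x1
    · have hne : x ≠ x1 := by
        rintro rfl
        exact hmn (hc.1.trans hc.2.symm)
      simp [hc, hne]
    · by_cases hxx : x = x1
      · subst hxx
        simp [hc]
      · simp [hxx, hc]
  have hguard2 : ∀ x x1 : N, (if x1 = x then (0:ℝ) else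
        (if m = x1 ∧ n = x then w (Sum.inr (Sum.inl (Sum.inr (x, x1)))) else 0)
          + if m = x ∧ n = x1 then w (Sum.inr (Sum.inl (Sum.inr (x, x1)))) else 0)
      = (if m = x1 ∧ n = x then w (Sum.inr (Sum.inl (Sum.inr (x, x1)))) else 0)
        + (if m = x ∧ n = x1 then w (Sum.inr (Sum.inl (Sum.inr (x, x1)))) else 0) := by
    intro x x1
    by_cases hxx : x1 = x
    · subst hxx
      have h1 : ¬ (m = x1 ∧ n = x1) := fun hc => hmn (hc.1.trans hc.2.symm)
      simp [h1]
    · simp [hxx]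
  have hpair : ∀ v : N → N → ℝ,
      ∑ x : N, ∑ x1 : N, (if m = x ∧ n = x1 then v x x1 else 0) = v m n := by
    intro v
    have hinner : ∀ x, ∑ x1, (if m = x ∧ n = x1 then v x x1 else 0)
        = if m = x then v x n else 0 := by
      intro x
      by_cases hx : m = x
      · simp only [hx, true_and]
        rw [Finset.sum_ite_eq]
        simp
      · simp [hx]
    rw [Finset.sum_congr rfl fun x _ => hinner x, Finset.sum_ite_eq]
    simp
  have hsingle : ∀ v : N → ℝ, ∑ x : N, (if n = x ∧ ¬ m = x then v x else 0) = v n := by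
    intro v
    have hx0 : ∀ x, (if n = x ∧ ¬ m = x then v x else 0) = if n = x then v x else 0 := by
      intro x
      by_cases hx : n = x
      · subst hx
        simp [hmn]
      · simp [hx]
    rw [Finset.sum_congr rfl fun x _ => hx0 x, Finset.sum_ite_eq]
    simp
  have e1 : ∑ x : N, ∑ x1 : N, (if x = x1 then (0:ℝ)
        else if m = x ∧ n = x1 then w (Sum.inr (Sum.inl (Sum.inl (x, x1)))) else 0)
      = w (Sum.inr (Sum.inl (Sum.inl (m, n)))) := by
    rw [Finset.sum_congr rfl fun x _ => Finset.sum_congr rfl fun x1 _ => hguard1 x x1]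
    exact hpair (fun a b => w (Sum.inr (Sum.inl (Sum.inl (a, b)))))
  have e2 : ∑ x : N, ∑ x1 : N, (if x1 = x then (0:ℝ) else
        (if m = x1 ∧ n = x then w (Sum.inr (Sum.inl (Sum.inr (x, x1)))) else 0)
          + if m = x ∧ n = x1 then w (Sum.inr (Sum.inl (Sum.inr (x, x1)))) else 0)
      = w (Sum.inr (Sum.inl (Sum.inr (n, m)))) + w (Sum.inr (Sum.inl (Sum.inr (m, n)))) := by
    rw [Finset.sum_congr rfl fun x _ => Finset.sum_congr rfl fun x1 _ => hguard2 x x1]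
    rw [Finset.sum_congr rfl fun x (_ : x ∈ Finset.univ) => Finset.sum_add_distrib,
      Finset.sum_add_distrib]
    congr 1
    · rw [Finset.sum_comm]
      exact hpair (fun a b => w (Sum.inr (Sum.inl (Sum.inr (b, a)))))
    · exact hpair (fun a b => w (Sum.inr (Sum.inl (Sum.inr (a, b)))))
  rw [e1, e2, hsingle (fun x => w (Sum.inr (Sum.inr (Sum.inl x)))),
    hsingle (fun x => w (Sum.inr (Sum.inr (Sum.inr x))))]
  ring


end MarketParams

namespace MarketParams

open Finset

variable {N : Type*} [Fintype N] [DecidableEq N]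

lemma opt_imp_ve (P : MarketParams N) (hta : ∀ n, 0 < P.ta n) (ha : ∀ n, 0 < P.a n)
    {D G : N → ℝ} {q : N → N → ℝ} (hF : P.Feas D G q)
    (hopt : ∀ D' G' q', P.Feas D' G' q' → P.SW D' G' q' ≤ P.SW D G q) :
    P.IsVE D G q := by
  classical
  have hFx : P.Feas ((D, G, q) : EV N).1 ((D, G, q) : EV N).2.1 ((D, G, q) : EV N).2.2 := hF
  rcases myFarkas (E := EV N) dotE dotE_sub_left dotE_smul_left dotE_sub_right dotE_smul_right
      dotE_posdef Finset.univ
      (fun c => if dotE (Anor c) ((D, G, q) : EV N) = P.rhsC c then Anor c else 0)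
      (gradE P ((D, G, q) : EV N)) with ⟨y, hy, hrep⟩ | ⟨d, hd, hbd⟩
  · -- representation: build multipliers
    set yh : CIdx N → ℝ :=
      fun c => if dotE (Anor c) ((D, G, q) : EV N) = P.rhsC c then y c else 0 with hyh
    have hyh0 : ∀ c, 0 ≤ yh c := by
      intro c
      rw [hyh]
      by_cases h : dotE (Anor c) ((D, G, q) : EV N) = P.rhsC c <;> simp [h, hy c]
    have hyhz : ∀ c, ¬ (dotE (Anor c) ((D, G, q) : EV N) = P.rhsC c) → yh c = 0 := by
      intro c hc
      rw [hyh]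
      simp [hc]
    have hrep' : gradE P ((D, G, q) : EV N) = ∑ c, yh c • Anor c := by
      rw [hrep]
      refine Finset.sum_congr rfl fun c _ => ?_
      by_cases h : dotE (Anor c) ((D, G, q) : EV N) = P.rhsC c <;> simp [hyh, h]
    have hD : ∀ n, -(2 * P.ta n * (D n - P.Dstar n))
        = -(yh (idl n)) + yh (idu n) + (yh (ibp n) - yh (ibm n)) := by
      intro n
      have h1 : (gradE P ((D, G, q) : EV N)).1 n = (∑ c, yh c • Anor c).1 n := by
        rw [← hrep']
      rw [fst_sumEV, Finset.sum_apply] at h1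
      have h2 : ∀ c ∈ Finset.univ, ((yh c • Anor c).1) n = yh c * (Anor c).1 n :=
        fun c _ => rfl
      rw [Finset.sum_congr rfl h2, sum_w_D] at h1
      exact h1
    have hG : ∀ n, -(P.a n * G n + P.b n)
        = -(yh (igl n)) + yh (igu n) - (yh (ibp n) - yh (ibm n)) := by
      intro n
      have h1 : (gradE P ((D, G, q) : EV N)).2.1 n = (∑ c, yh c • Anor c).2.1 n := by
        rw [← hrep']
      rw [snd_sumEV, fst_sumEV, Finset.sum_apply] at h1
      have h2 : ∀ c ∈ Finset.univ, (((yh c • Anor c).2.1)) n = yh c * (Anor c).2.1 n :=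
        fun c _ => rfl
      rw [Finset.sum_congr rfl h2, sum_w_G] at h1
      exact h1
    have hq : ∀ n m, m ≠ n → -(P.c n m)
        = yh (icap m n) + (yh (itr n m) + yh (itr m n)) - (yh (ibp n) - yh (ibm n)) := by
      intro n m hmn
      have h1 : (gradE P ((D, G, q) : EV N)).2.2 m n = (∑ c, yh c • Anor c).2.2 m n := by
        rw [← hrep']
      rw [snd_sumEV, snd_sumEV, Finset.sum_apply, Finset.sum_apply] at h1
      have h2 : ∀ c ∈ Finset.univ, (((yh c • Anor c).2.2)) m n = yh c * (Anor c).2.2 m n :=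
        fun c _ => rfl
      rw [Finset.sum_congr rfl h2, sum_w_q yh hmn] at h1
      have h3 : (gradE P ((D, G, q) : EV N)).2.2 m n = -(P.c n m) := by
        show (if m = n then (0:ℝ) else -(P.c n m)) = -(P.c n m)
        rw [if_neg hmn]
      rw [h3] at h1
      exact h1
    refine ⟨fun n => yh (idl n), fun n => yh (idu n), fun n => yh (igl n), fun n => yh (igu n),
      fun n => yh (ibp n) - yh (ibm n),
      fun n m => yh (icap m n),
      fun n m => yh (itr n m) + yh (itr m n),
      ⟨hF, ?_, ?_, ?_, ?_, ?_, ?_, ?_, ?_, ?_⟩,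
      fun n m => by ring⟩
    · intro n
      dsimp only
      linarith [hD n]
    · intro n
      dsimp only
      linarith [hG n]
    · intro n m hmn
      dsimp only
      linarith [hq n m hmn]
    · -- μl complementarity
      intro n
      dsimp only
      refine ⟨hyh0 _, ?_⟩
      by_cases hc : dotE (Anor (idl n)) ((D, G, q) : EV N) = P.rhsC (idl n)
      · have h2 : -(D n) = -(P.Dlow n) := by
          rw [dot_Anor_dl] at hc
          exact hc
        have h3 : D n - P.Dlow n = 0 := by linarith
        rw [h3, mul_zero]
      · rw [hyhz _ hc, zero_mul]
    · -- μu
      intro n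
      dsimp only
      refine ⟨hyh0 _, ?_⟩
      by_cases hc : dotE (Anor (idu n)) ((D, G, q) : EV N) = P.rhsC (idu n)
      · have h2 : D n = P.Dbar n := by
          rw [dot_Anor_du] at hc
          exact hc
        have h3 : P.Dbar n - D n = 0 := by linarith
        rw [h3, mul_zero]
      · rw [hyhz _ hc, zero_mul]
    · -- νl
      intro n
      dsimp only
      refine ⟨hyh0 _, ?_⟩
      by_cases hc : dotE (Anor (igl n)) ((D, G, q) : EV N) = P.rhsC (igl n)
      · have h2 : -(G n) = -(P.Glow n) := by
          rw [dot_Anor_gl] at hc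
          exact hc
        have h3 : G n - P.Glow n = 0 := by linarith
        rw [h3, mul_zero]
      · rw [hyhz _ hc, zero_mul]
    · -- νu
      intro n
      dsimp only
      refine ⟨hyh0 _, ?_⟩
      by_cases hc : dotE (Anor (igu n)) ((D, G, q) : EV N) = P.rhsC (igu n)
      · have h2 : G n = P.Gbar n := by
          rw [dot_Anor_gu] at hc
          exact hc
        have h3 : P.Gbar n - G n = 0 := by linarith
        rw [h3, mul_zero]
      · rw [hyhz _ hc, zero_mul]
    · -- ξ
      intro n m hmn
      dsimp only
      refine ⟨hyh0 _, ?_⟩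
      by_cases hc : dotE (Anor (icap m n)) ((D, G, q) : EV N) = P.rhsC (icap m n)
      · have h2 : (if m = n then (0:ℝ) else q m n) = (if m = n then 1 else P.κ m n) := by
          rw [dot_Anor_cap] at hc
          exact hc
        rw [if_neg hmn, if_neg hmn] at h2
        have h3 : P.κ m n - q m n = 0 := by rw [h2]; ring
        rw [h3, mul_zero]
      · rw [hyhz _ hc, zero_mul]
    · -- ζ
      intro n m hmn
      dsimp only
      refine ⟨add_nonneg (hyh0 _) (hyh0 _), ?_⟩
      by_cases hc : q m n + q n m = 0
      · have h3 : -(q m n) - q n m = 0 := by linarith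
        rw [h3, mul_zero]
      · have h1 : yh (itr n m) = 0 := by
          apply hyhz
          intro hceq
          rw [dot_Anor_tr] at hceq
          have h2 : (if m = n then (0:ℝ) else q m n + q n m) = 0 := hceq
          rw [if_neg hmn] at h2
          exact hc h2
        have h2 : yh (itr m n) = 0 := by
          apply hyhz
          intro hceq
          rw [dot_Anor_tr] at hceq
          have h3 : (if n = m then (0:ℝ) else q n m + q m n) = 0 := hceq
          rw [if_neg (fun h => hmn h.symm)] at h3
          apply hc
          linarith
        rw [h1, h2, add_zero, zero_mul]
  · -- separation: contradiction with optimality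
    exfalso
    have hfeas_all : ∀ c, dotE (Anor c) ((D, G, q) : EV N) ≤ P.rhsC c :=
      (P.feas_iff ((D, G, q) : EV N)).mp hFx
    set B : ℝ := dotE (gradE P ((D, G, q) : EV N)) d with hB
    set Qd : ℝ := Qf P d with hQd
    have hQd0 : 0 ≤ Qd := by
      rw [hQd]
      unfold Qf
      exact Finset.sum_nonneg fun n _ => add_nonneg (mul_nonneg (hta n).le (sq_nonneg _))
        (mul_nonneg (by linarith [ha n]) (sq_nonneg _))
    set τ : CIdx N → ℝ := fun c => if dotE (Anor c) d ≤ 0 then 1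
        else (P.rhsC c - dotE (Anor c) ((D, G, q) : EV N)) / dotE (Anor c) d with hτ
    have hτpos : ∀ c, 0 < τ c := by
      intro c
      rw [hτ]
      by_cases hc : dotE (Anor c) d ≤ 0
      · simp [hc]
      · push_neg at hc
        simp only [if_neg (not_le.mpr hc)]
        apply div_pos _ hc
        have hne : ¬ (dotE (Anor c) ((D, G, q) : EV N) = P.rhsC c) := by
          intro hceq
          have h1 := hd c (Finset.mem_univ c)
          simp only [if_pos hceq] at h1
          exact absurd h1 (not_le.mpr hc)
        rcases lt_or_eq_of_le (hfeas_all c) with h | h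
        · linarith
        · exact absurd h hne
    set S : Finset ℝ := insert 1 (Finset.image τ Finset.univ) with hS
    have hSne : S.Nonempty := ⟨1, Finset.mem_insert_self _ _⟩
    set t1 := S.min' hSne with ht1
    have ht1pos : 0 < t1 := by
      rw [ht1, Finset.lt_min'_iff]
      intro z hz
      rcases Finset.mem_insert.mp hz with rfl | hz
      · norm_num
      · obtain ⟨c, _, rfl⟩ := Finset.mem_image.mp hz
        exact hτpos c
    set t : ℝ := min t1 (B / (2 * (Qd + 1))) with ht
    have htpos : 0 < t := lt_min ht1pos (div_pos hbd (by linarith))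
    have hfeas' : P.Feas (((D, G, q) : EV N) + t • d).1 ((((D, G, q) : EV N)) + t • d).2.1
        ((((D, G, q) : EV N)) + t • d).2.2 := by
      rw [feas_iff]
      intro c
      rw [dotE_add_right, dotE_smul_right]
      by_cases hc : dotE (Anor c) d ≤ 0
      · have h1 : t * dotE (Anor c) d ≤ 0 :=
          mul_nonpos_iff.mpr (Or.inl ⟨htpos.le, hc⟩)
        linarith [hfeas_all c]
      · push_neg at hc
        have htleτ : t ≤ τ c :=
          le_trans (min_le_left _ _)
            (Finset.min'_le S (τ c)
              (Finset.mem_insert_of_mem (Finset.mem_image_of_mem τ (Finset.mem_univ c))))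
        rw [hτ] at htleτ
        simp only [if_neg (not_le.mpr hc)] at htleτ
        have h2 := (le_div_iff₀ hc).mp htleτ
        linarith
    have hle := hopt _ _ _ hfeas'
    have hgain := P.SW_diff_dot ((D, G, q) : EV N) (((D, G, q) : EV N) + t • d)
    rw [add_sub_cancel_left, dotE_smul_right] at hgain
    have hQsc : Qf P (t • d) = t ^ 2 * Qd := by
      rw [hQd]
      unfold Qf
      rw [Finset.mul_sum]
      refine Finset.sum_congr rfl fun n _ => ?_
      simp only [Prod.smul_fst, Prod.smul_snd, Pi.smul_apply, smul_eq_mul]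
      ring
    rw [hQsc] at hgain
    have hSWx : P.SW ((D, G, q) : EV N).1 ((D, G, q) : EV N).2.1 ((D, G, q) : EV N).2.2
        = P.SW D G q := rfl
    rw [hSWx] at hgain
    have ht2 : t ≤ B / (2 * (Qd + 1)) := min_le_right _ _
    have h3 : t * (2 * (Qd + 1)) ≤ B := (le_div_iff₀ (by linarith)).mp ht2
    nlinarith [mul_le_mul_of_nonneg_left h3 htpos.le, mul_pos htpos htpos]

end MarketParams

/-- the set of Variational Equilibria of the peer-to-peer market game
(Generalized Nash Equilibria in which the multipliers of each shared reciprocity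
constraint are equal across the two agents sharing it) coincides with the set of
maximizers of the social welfare over the joint feasible set. -/
theorem stmt7 {N : Type*} [Fintype N] [DecidableEq N] (P : MarketParams N)
    (hta : ∀ n, 0 < P.ta n) (ha : ∀ n, 0 < P.a n)
    (D G : N → ℝ) (q : N → N → ℝ) :
    P.IsVE D G q ↔
      (P.Feas D G q ∧ ∀ D' G' q', P.Feas D' G' q' → P.SW D' G' q' ≤ P.SW D G q) := by
  constructor
  · rintro ⟨μl, μu, νl, νu, lam, ξ, ζ, hK, hsym⟩
    exact ⟨hK.1, fun D' G' q' hF' => P.kkt_imp_opt hta ha hK hsym hF'⟩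
  · rintro ⟨hF, hopt⟩
    exact P.opt_imp_ve hta ha hF hopt
end

section
/- At a GNE of the peer-to-peer market with no energy waste (Σ_n Q_n = 0), defining r_n by ζ_{0n} r_n = ζ_{n0}, the nodal prices satisfy λ_n = r_n λ_0 + (c_{n0} − r_n c_{0n}) + (ξ_{n0} − r_n ξ_{0n}) for all n ≠ 0, and the root price satisfies λ_0 · Σ_n (1/(2ã_n) + 1/a_n) r_n = Σ_n [D_n* − (1/(2ã_n))(μ̄_n − μ̲_n) + b_n/a_n + (1/a_n)(ν̄_n − ν̲_n) − ΔG_n] − Σ_{n≠0} (1/(2ã_n) + 1/a_n)[(c_{n0} − r_n c_{0n}) + (ξ_{n0} − r_n ξ_{0n})]. -/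
/-!
Subtracting `r_n` times the root's stationarity condition from node `n`'s eliminates the
shared-constraint multiplier, since `ζ_{n0} = r_n ζ_{0n}`; so every nodal price is affine in
`λ_0`, and substituting this into the balance `∑ Q_n = 0` leaves a linear equation for `λ_0`.
-/

open Finset

lemma eq_mul_add_of_stationarity {R : Type*} [CommRing R]
    {l l₀ ζ ζ₀ c c₀ ξ ξ₀ r : R} (h : l = ζ + c + ξ) (h₀ : l₀ = ζ₀ + c₀ + ξ₀)
    (hr : ζ₀ * r = ζ) :
    l = r * l₀ + (c - r * c₀) + (ξ - r * ξ₀) := by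
  linear_combination h - r * h₀ - hr

lemma sum_mul_eq_of_eq_mul_add {ι R : Type*} [CommRing R] [DecidableEq ι]
    {s : Finset ι} {i₀ : ι} (hi₀ : i₀ ∈ s) (k x r e : ι → R) (hr : r i₀ = 1)
    (hx : ∀ i ∈ s.erase i₀, x i = r i * x i₀ + e i) :
    ∑ i ∈ s, k i * x i = x i₀ * ∑ i ∈ s, k i * r i + ∑ i ∈ s.erase i₀, k i * e i := by
  have hrest : ∑ i ∈ s.erase i₀, k i * x i =
      x i₀ * ∑ i ∈ s.erase i₀, k i * r i + ∑ i ∈ s.erase i₀, k i * e i := by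
    rw [mul_sum, ← sum_add_distrib]
    exact sum_congr rfl fun i hi => by rw [hx i hi]; ring
  rw [← add_sum_erase s _ hi₀, ← add_sum_erase s _ hi₀, hrest, hr]
  ring

theorem stmt13_general {N : Type*} [Fintype N] [DecidableEq N] (root : N)
    (ta a b Dstar ΔG lam Q μl μu νl νu r : N → ℝ) (c ξ ζ : N → N → ℝ)
    (hstat : ∀ n m, n ≠ m → lam n = ζ n m + c n m + ξ n m)
    (hr : ∀ n, n ≠ root → ζ root n * r n = ζ n root)
    (hrroot : r root = 1)
    (hQ : ∀ n, Q n = (Dstar n - 1 / (2 * ta n) * (μu n - μl n) + b n / a n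
        + 1 / a n * (νu n - νl n)) - (1 / (2 * ta n) + 1 / a n) * lam n - ΔG n)
    (hnowaste : ∑ n, Q n = 0) :
    (∀ n, n ≠ root →
      lam n = r n * lam root + (c n root - r n * c root n)
        + (ξ n root - r n * ξ root n)) ∧
    lam root * ∑ n, (1 / (2 * ta n) + 1 / a n) * r n =
      ∑ n, (Dstar n - 1 / (2 * ta n) * (μu n - μl n) + b n / a n
          + 1 / a n * (νu n - νl n) - ΔG n)
      - ∑ n ∈ Finset.univ.erase root, (1 / (2 * ta n) + 1 / a n) *
          ((c n root - r n * c root n) + (ξ n root - r n * ξ root n)) := by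
  have hlam : ∀ n, n ≠ root →
      lam n = r n * lam root + (c n root - r n * c root n)
        + (ξ n root - r n * ξ root n) := fun n hn =>
    eq_mul_add_of_stationarity (hstat n root hn) (hstat root n (Ne.symm hn)) (hr n hn)
  refine ⟨hlam, ?_⟩
  have hbalance : ∑ n, (1 / (2 * ta n) + 1 / a n) * lam n =
      ∑ n, (Dstar n - 1 / (2 * ta n) * (μu n - μl n) + b n / a n
          + 1 / a n * (νu n - νl n) - ΔG n) := by
    rw [eq_comm, ← sub_eq_zero, ← sum_sub_distrib, ← hnowaste]
    exact sum_congr rfl fun n _ => by rw [hQ n]; ring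
  rw [sum_mul_eq_of_eq_mul_add (mem_univ root) _ lam r _ hrroot
    fun n hn => (hlam n (ne_of_mem_erase hn)).trans (add_assoc _ _ _)] at hbalance
  linear_combination hbalance

/-- at a GNE of the peer-to-peer market with no energy waste, defining
`r_n` by `ζ_{0n} r_n = ζ_{n0}`, the nodal prices satisfy
`λ_n = r_n λ_0 + (c_{n0} − r_n c_{0n}) + (ξ_{n0} − r_n ξ_{0n})` for `n ≠ 0`, and the
root price satisfies the stated closed-form sum identity. -/
theorem stmt13 {N : Type*} [Fintype N] [DecidableEq N] (root : N)
    (ta a b Dstar ΔG lam Q μl μu νl νu r : N → ℝ) (c ξ ζ : N → N → ℝ)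
    (hta : ∀ n, 0 < ta n) (ha : ∀ n, 0 < a n)
    (hstat : ∀ n m, n ≠ m → lam n = ζ n m + c n m + ξ n m)
    (hr : ∀ n, n ≠ root → ζ root n * r n = ζ n root)
    (hrroot : r root = 1)
    (hQ : ∀ n, Q n = (Dstar n - 1 / (2 * ta n) * (μu n - μl n) + b n / a n
        + 1 / a n * (νu n - νl n)) - (1 / (2 * ta n) + 1 / a n) * lam n - ΔG n)
    (hnowaste : ∑ n, Q n = 0) :
    (∀ n, n ≠ root →
      lam n = r n * lam root + (c n root - r n * c root n)
        + (ξ n root - r n * ξ root n)) ∧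
    lam root * ∑ n, (1 / (2 * ta n) + 1 / a n) * r n =
      ∑ n, (Dstar n - 1 / (2 * ta n) * (μu n - μl n) + b n / a n
          + 1 / a n * (νu n - νl n) - ΔG n)
      - ∑ n ∈ Finset.univ.erase root, (1 / (2 * ta n) + 1 / a n) *
          ((c n root - r n * c root n) + (ξ n root - r n * ξ root n)) :=
  stmt13_general root ta a b Dstar ΔG lam Q μl μu νl νu r c ξ ζ hstat hr hrroot hQ hnowaste
end
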